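/- Let m ≡ 0 (mod 4) and n ≥ 2 be integers, and let k = ⌊n/2⌋. Then the multiplicity of 2k as an eigenvalue of the adjacency matrix of the generalised pancake graph P_m(n) is at least 2. -/

import Mathlib

open Polynomial

/-- An `m`-coloured permutation of `{1, …, n}`: a pair `(χ, ψ)` of a colour
function `χ : [n] → ℤ/mℤ` and a permutation `ψ` of `[n]` (positions and letters
are 0-indexed, so the letter `1` of the paper corresponds to `0 : Fin n`). -/
abbrev ColouredPerm (m n : ℕ) := (Fin n → ZMod m) × Equiv.Perm (Fin n)

/-- The map on positions underlying reversal of the prefix of length `k`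
(for `1 ≤ k ≤ n`; it is the identity outside this range of `k`). -/
def flipFun (n k : ℕ) : Fin n → Fin n := fun t =>
  if h : t.val < k ∧ k ≤ n then ⟨k - 1 - t.val, by omega⟩ else t

theorem flipFun_involutive (n k : ℕ) : Function.Involutive (flipFun n k) := by
  intro t
  unfold flipFun
  by_cases h : t.val < k ∧ k ≤ n
  · rw [dif_pos h, dif_pos (by simp only [Fin.val_mk]; omega)]
    apply Fin.ext
    simp only [Fin.val_mk]
    omega
  · rw [dif_neg h, dif_neg h]

/-- Reversal of the prefix of length `k`, as a permutation of positions. -/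
def flipPerm (n k : ℕ) : Equiv.Perm (Fin n) := (flipFun_involutive n k).toPerm

/-- The prefix reversal `r_k^ε` acting on `m`-coloured permutations: it
reverses the prefix of length `k` and adds `ε` to the colours in that prefix. -/
def prefixRev (m n : ℕ) (k : ℕ) (ε : ZMod m) (σ : ColouredPerm m n) :
    ColouredPerm m n :=
  (fun t => if t.val < k then σ.1 (flipPerm n k t) + ε else σ.1 t,
   σ.2 * flipPerm n k)

/-- Adjacency in the generalised pancake graph: two distinct coloured
permutations are adjacent iff one is obtained from the other by a prefix
reversal `r_k^ε` with `1 ≤ k ≤ n` and `ε ∈ {+1, -1}`. -/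
def pancakeAdj (m n : ℕ) (σ τ : ColouredPerm m n) : Prop :=
  σ ≠ τ ∧ ∃ k, 1 ≤ k ∧ k ≤ n ∧ ∃ ε : ZMod m, (ε = 1 ∨ ε = -1) ∧
    (τ = prefixRev m n k ε σ ∨ σ = prefixRev m n k ε τ)

/-- The generalised pancake graph `𝒫_m(n)`. -/
def pancakeGraph (m n : ℕ) : SimpleGraph (ColouredPerm m n) where
  Adj := pancakeAdj m n
  symm := ⟨by
    rintro a b ⟨hab, k, hk1, hk2, ε, hε, h⟩
    exact ⟨hab.symm, k, hk1, hk2, ε, hε, h.symm⟩⟩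
  loopless := ⟨by rintro a ⟨h, -⟩; exact h rfl⟩

open Classical in
/-- The (real) adjacency matrix of the generalised pancake graph `𝒫_m(n)`. -/
noncomputable def pancakeAdjMatrix (m n : ℕ) :
    Matrix (ColouredPerm m n) (ColouredPerm m n) ℝ :=
  Matrix.of fun σ τ => if pancakeAdj m n σ τ then 1 else 0

/-- The `i`-th largest eigenvalue (`i = 1, 2, …`) of a real matrix `M`,
i.e. the `i`-th largest root of its characteristic polynomial, counted
with multiplicity (junk value `0` if there are fewer than `i` real roots). -/
noncomputable def nthLargestEig {V : Type*} [Fintype V] [DecidableEq V]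
    (M : Matrix V V ℝ) (i : ℕ) : ℝ :=
  ((M.charpoly.roots.sort (· ≤ ·)).reverse).getD (i - 1) 0

/-- The diagonal matrix `D_n = diag(0, 1, …, n-1)`. -/
noncomputable def Dmat (n : ℕ) : Matrix (Fin n) (Fin n) ℝ :=
  Matrix.diagonal fun j => (j.val : ℝ)

/-- The 0/1 matrix `E_n`, whose `(i, j)` entry (1-indexed) is `1` iff
`i + j ≤ n + 1`. -/
noncomputable def Emat (n : ℕ) : Matrix (Fin n) (Fin n) ℝ :=
  Matrix.of fun j j' => if (j.val + 1) + (j'.val + 1) ≤ n + 1 then 1 else 0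

/-- The `mn × mn` block circulant matrix `circ(B_0, …, B_{m-1})` whose
`(r, s)` block is `B_{s - r mod m}`. -/
def blockCirc (m n : ℕ) (B : ZMod m → Matrix (Fin n) (Fin n) ℝ) :
    Matrix (ZMod m × Fin n) (ZMod m × Fin n) ℝ :=
  Matrix.of fun p q => B (q.1 - p.1) p.2 q.2

/-- The part `V_{i,j}` of the vertex set of `𝒫_m(n)`: those coloured
permutations in which the letter `1` (here `0 : Fin n`) occupies position `j`
with colour `i`. -/
def Vpart (m n : ℕ) (i : ZMod m) (j : Fin n) : Set (ColouredPerm m n) :=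
  {σ | σ.2 j = ⟨0, j.pos⟩ ∧ σ.1 j = i}

/-!
Fix a (0-indexed) position `j` and a colour function `g : ℤ/mℤ → ℝ` with
`g (c + 1) + g (c - 1) = 0`, and let `v` take the value `g (χ j)` at the vertices `(χ, ψ)` whose
letter `1` sits at position `j`, and `0` elsewhere. Then `A v = 2j • v` for the adjacency matrix
`A`: at any vertex, the `2j` reversals of a prefix of length `k ≤ j` fix that position and its
colour, while for `k > j` the two reversals `r_k^{±1}` contribute `g (x + 1) + g (x - 1) = 0`.
When `4 ∣ m`, `c ↦ Re (i ^ c)` is well defined on `ℤ/mℤ`, and it and its shift by one are two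
independent such `g`, so `2⌊n/2⌋` has geometric, hence algebraic, multiplicity at least `2`.
-/

open Finset Matrix

theorem Matrix.card_le_rootMultiplicity_charpoly {K ι V : Type*} [Field K] [Fintype ι]
    [Fintype V] [DecidableEq V] (A : Matrix V V K) (μ : K) {v : ι → V → K}
    (hv : LinearIndependent K v) (hAv : ∀ i, A *ᵥ v i = μ • v i) :
    Fintype.card ι ≤ A.charpoly.rootMultiplicity μ := by
  have hspan : Submodule.span K (Set.range v) ≤ Module.End.eigenspace (toLin' A) μ :=
    Submodule.span_le.mpr <| Set.range_subset_iff.mpr fun i ↦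
      Module.End.mem_eigenspace_iff.mpr (by rw [toLin'_apply, hAv])
  calc Fintype.card ι = Module.finrank K (Submodule.span K (Set.range v)) :=
        (finrank_span_eq_card hv).symm
    _ ≤ Module.finrank K (Module.End.eigenspace (toLin' A) μ) := Submodule.finrank_mono hspan
    _ ≤ (toLin' A).charpoly.rootMultiplicity μ := LinearMap.finrank_eigenspace_le _ μ
    _ = A.charpoly.rootMultiplicity μ := by rw [charpoly_toLin']

section PrefixReversal

variable {m n k : ℕ}

theorem flipPerm_val_of_lt {t : Fin n} (ht : t.val < k) (hk : k ≤ n) :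
    (flipPerm n k t).val = k - 1 - t.val := by
  simp [flipPerm, flipFun, ht, hk]

theorem flipPerm_of_le {t : Fin n} (ht : k ≤ t.val) : flipPerm n k t = t := by
  simp [flipPerm, flipFun, show ¬ t.val < k by omega]

theorem flipPerm_val_lt_iff {t : Fin n} : (flipPerm n k t).val < k ↔ t.val < k := by
  simp only [flipPerm, Function.Involutive.coe_toPerm, flipFun]
  split_ifs with h
  · exact iff_of_true (show k - 1 - t.val < k by omega) h.1
  · rfl

theorem flipPerm_mul_self : flipPerm n k * flipPerm n k = 1 :=
  Equiv.ext (flipFun_involutive n k)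

theorem prefixRev_neg_prefixRev (ε : ZMod m) (σ : ColouredPerm m n) :
    prefixRev m n k (-ε) (prefixRev m n k ε σ) = σ := by
  refine Prod.ext (funext fun t ↦ ?_) ?_
  · by_cases ht : t.val < k
    · simp [prefixRev, ht, flipPerm_val_lt_iff.mpr ht, flipPerm_mul_self,
        ← Equiv.Perm.mul_apply]
    · simp [prefixRev, ht]
  · simp [prefixRev, mul_assoc, flipPerm_mul_self]

theorem prefixRev_ne_self {ε : ZMod m} (hε : ε ≠ 0) (hk : 1 ≤ k) (hkn : k ≤ n)
    (σ : ColouredPerm m n) : prefixRev m n k ε σ ≠ σ := by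
  intro h
  have hflip : flipPerm n k = 1 := mul_left_cancel ((congrArg Prod.snd h).trans (mul_one _).symm)
  have hcolour := congrFun (congrArg Prod.fst h) ⟨0, by omega⟩
  exact hε (by simpa [prefixRev, hflip, show 0 < k by omega] using hcolour)

theorem prefixRev_injOn (σ : ColouredPerm m n) :
    Set.InjOn (fun p : ℕ × ZMod m ↦ prefixRev m n p.1 p.2 σ) (Set.Icc 1 n ×ˢ Set.univ) := by
  rintro ⟨k, ε⟩ ⟨⟨hk, hkn⟩, -⟩ ⟨k', ε'⟩ ⟨⟨hk', hkn'⟩, -⟩ h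
  have hflip : flipPerm n k = flipPerm n k' := mul_left_cancel (congrArg Prod.snd h)
  have h0 := congrArg Fin.val (DFunLike.congr_fun hflip ⟨0, by omega⟩)
  rw [flipPerm_val_of_lt hk hkn, flipPerm_val_of_lt hk' hkn'] at h0
  simp only [Nat.sub_zero] at h0
  obtain rfl : k = k' := by omega
  have hcolour := congrFun (congrArg Prod.fst h) ⟨0, by omega⟩
  simp only [prefixRev, show 0 < k by omega, if_true, add_right_inj] at hcolour
  rw [hcolour]

end PrefixReversal

section PancakeGraph

variable {m n : ℕ}

theorem pancakeAdj_iff (hm : 2 < m) {σ τ : ColouredPerm m n} :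
    pancakeAdj m n σ τ ↔
      ∃ k, 1 ≤ k ∧ k ≤ n ∧ ∃ ε : ZMod m, (ε = 1 ∨ ε = -1) ∧ τ = prefixRev m n k ε σ := by
  have : Fact (1 < m) := ⟨by omega⟩
  constructor
  · rintro ⟨-, k, hk, hkn, ε, hε, rfl | rfl⟩
    · exact ⟨k, hk, hkn, ε, hε, rfl⟩
    · refine ⟨k, hk, hkn, -ε, ?_, (prefixRev_neg_prefixRev ε τ).symm⟩
      rcases hε with rfl | rfl <;> simp
  · rintro ⟨k, hk, hkn, ε, hε, rfl⟩
    have hε0 : ε ≠ 0 := by rcases hε with rfl | rfl <;> simp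
    exact ⟨(prefixRev_ne_self hε0 hk hkn σ).symm, k, hk, hkn, ε, hε, Or.inl rfl⟩

theorem pancakeAdjMatrix_mulVec_apply [NeZero m] (hm : 2 < m) (f : ColouredPerm m n → ℝ)
    (σ : ColouredPerm m n) :
    (pancakeAdjMatrix m n *ᵥ f) σ = ∑ k ∈ Icc 1 n, ∑ ε ∈ {1, -1}, f (prefixRev m n k ε σ) := by
  classical
  have hneighbours : univ.filter (pancakeAdj m n σ) =
      (Icc 1 n ×ˢ {1, -1}).image fun p : ℕ × ZMod m ↦ prefixRev m n p.1 p.2 σ := by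
    ext τ
    simp only [mem_filter, mem_univ, true_and, mem_image, mem_product, mem_Icc, mem_insert,
      mem_singleton, Prod.exists, pancakeAdj_iff hm]
    constructor
    · rintro ⟨k, hk, hkn, ε, hε, rfl⟩
      exact ⟨k, ε, ⟨⟨hk, hkn⟩, hε⟩, rfl⟩
    · rintro ⟨k, ε, ⟨⟨hk, hkn⟩, hε⟩, rfl⟩
      exact ⟨k, hk, hkn, ε, hε, rfl⟩
  have hinj : Set.InjOn (fun p : ℕ × ZMod m ↦ prefixRev m n p.1 p.2 σ)
      ↑(Icc 1 n ×ˢ ({1, -1} : Finset (ZMod m))) :=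
    (prefixRev_injOn σ).mono (by rw [coe_product, coe_Icc]; exact Set.prod_mono le_rfl (by simp))
  calc (pancakeAdjMatrix m n *ᵥ f) σ = ∑ τ ∈ univ.filter (pancakeAdj m n σ), f τ := by
        simp [pancakeAdjMatrix, mulVec, dotProduct, sum_filter]
    _ = ∑ p ∈ Icc 1 n ×ˢ {1, -1}, f (prefixRev m n p.1 p.2 σ) := by
        rw [hneighbours, sum_image hinj]
    _ = _ := sum_product ..

end PancakeGraph

section PartVector

variable {m n : ℕ}

/-- The vector equal to `g i` on `Vpart m n i j`, for every colour `i`, and to `0` elsewhere. -/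
def vpartVec (j : Fin n) : (ZMod m → ℝ) →ₗ[ℝ] ColouredPerm m n → ℝ where
  toFun g σ := if σ.2 j = ⟨0, j.pos⟩ then g (σ.1 j) else 0
  map_add' g h := by ext σ; split_ifs <;> simp [*]
  map_smul' c g := by ext σ; split_ifs <;> simp [*]

theorem vpartVec_injective (j : Fin n) : Function.Injective (vpartVec (m := m) j) := by
  intro g h hgh
  funext c
  simpa [vpartVec] using congrFun hgh (fun _ ↦ c, Equiv.swap j ⟨0, j.pos⟩)

theorem vpartVec_prefixRev_of_le (g : ZMod m → ℝ) {j : Fin n} {k : ℕ} (hk : k ≤ j.val)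
    (ε : ZMod m) (σ : ColouredPerm m n) :
    vpartVec j g (prefixRev m n k ε σ) = vpartVec j g σ := by
  simp [vpartVec, prefixRev, flipPerm_of_le hk, not_lt.mpr hk]

theorem vpartVec_prefixRev_of_lt (g : ZMod m → ℝ) {j : Fin n} {k : ℕ} (hk : j.val < k)
    (ε : ZMod m) (σ : ColouredPerm m n) :
    vpartVec j g (prefixRev m n k ε σ) =
      if σ.2 (flipPerm n k j) = ⟨0, j.pos⟩ then g (σ.1 (flipPerm n k j) + ε) else 0 := by
  simp [vpartVec, prefixRev, hk]

theorem sum_vpartVec_prefixRev (hm : 2 < m) {g : ZMod m → ℝ}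
    (hg : ∀ c, g (c + 1) + g (c - 1) = 0) (j : Fin n) (k : ℕ) (σ : ColouredPerm m n) :
    ∑ ε ∈ {1, -1}, vpartVec j g (prefixRev m n k ε σ) =
      if k ≤ j.val then 2 * vpartVec j g σ else 0 := by
  have : Fact (2 < m) := ⟨hm⟩
  rw [sum_pair (CharP.neg_one_ne_one (ZMod m) m).symm]
  split_ifs with hk
  · rw [vpartVec_prefixRev_of_le g hk, vpartVec_prefixRev_of_le g hk, two_mul]
  · rw [vpartVec_prefixRev_of_lt g (not_le.mp hk), vpartVec_prefixRev_of_lt g (not_le.mp hk)]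
    split_ifs
    · rw [← sub_eq_add_neg, hg]
    · exact add_zero 0

theorem pancakeAdjMatrix_mulVec_vpartVec [NeZero m] (hm : 2 < m) {g : ZMod m → ℝ}
    (hg : ∀ c, g (c + 1) + g (c - 1) = 0) (j : Fin n) :
    pancakeAdjMatrix m n *ᵥ vpartVec j g = (2 * j.val : ℝ) • vpartVec j g := by
  funext σ
  have hfilter : (Icc 1 n).filter (· ≤ j.val) = Icc 1 j.val := by
    ext k
    simp only [mem_filter, mem_Icc]
    omega
  rw [pancakeAdjMatrix_mulVec_apply hm,
    sum_congr rfl fun k _ ↦ sum_vpartVec_prefixRev hm hg j k σ, ← sum_filter, hfilter,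
    sum_const, Nat.card_Icc, nsmul_eq_mul, Pi.smul_apply, smul_eq_mul]
  push_cast
  ring

end PartVector

section QuarterWave

/-- The real part of `Complex.I ^ x`. -/
def quarterWave (x : ZMod 4) : ℝ := if x = 0 then 1 else if x = 2 then -1 else 0

theorem quarterWave_add_one_add_sub_one (x : ZMod 4) :
    quarterWave (x + 1) + quarterWave (x - 1) = 0 := by
  fin_cases x <;> simp +decide [quarterWave]

variable {m : ℕ} (h4 : 4 ∣ m)

def quarterWaveMod (a : ZMod 4) (c : ZMod m) : ℝ := quarterWave (ZMod.castHom h4 (ZMod 4) c - a)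

theorem quarterWaveMod_add_one_add_sub_one (a : ZMod 4) (c : ZMod m) :
    quarterWaveMod h4 a (c + 1) + quarterWaveMod h4 a (c - 1) = 0 := by
  simpa only [quarterWaveMod, map_add, map_sub, map_one, add_sub_right_comm, sub_right_comm]
    using quarterWave_add_one_add_sub_one (ZMod.castHom h4 (ZMod 4) c - a)

theorem linearIndependent_quarterWaveMod :
    LinearIndependent ℝ ![quarterWaveMod h4 0, quarterWaveMod h4 1] := by
  refine LinearIndependent.pair_iff.mpr fun s t hst ↦ ⟨?_, ?_⟩
  · simpa +decide [quarterWaveMod, quarterWave] using congrFun hst 0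
  · simpa +decide [quarterWaveMod, quarterWave, -ZMod.castHom_apply] using congrFun hst 1

end QuarterWave

/-- For `m ≡ 0 (mod 4)` (with `m ≥ 1`) and `n ≥ 2`, taking
`k = ⌊n/2⌋`, the multiplicity of `2k` as an eigenvalue of the adjacency matrix
of `𝒫_m(n)` (i.e. as a root of its characteristic polynomial) is at least `2`. -/
theorem pancake_eigenvalue_multiplicity_two (m n : ℕ) (hm1 : 1 ≤ m)
    (hm4 : m % 4 = 0) (hn : 2 ≤ n) :
    haveI : NeZero m := ⟨by omega⟩
    2 ≤ (pancakeAdjMatrix m n).charpoly.rootMultiplicity ((2 * (n / 2) : ℕ) : ℝ) := by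
  have : NeZero m := ⟨by omega⟩
  have hm : 2 < m := by omega
  have h4 : 4 ∣ m := Nat.dvd_of_mod_eq_zero hm4
  let j : Fin n := ⟨n / 2, by omega⟩
  let waves := ![quarterWaveMod h4 0, quarterWaveMod h4 1]
  have hindep : LinearIndependent ℝ (vpartVec j ∘ waves) :=
    (linearIndependent_quarterWaveMod h4).map' _ (LinearMap.ker_eq_bot.mpr (vpartVec_injective j))
  have heigen (i : Fin 2) : pancakeAdjMatrix m n *ᵥ vpartVec j (waves i) =
      (2 * j.val : ℝ) • vpartVec j (waves i) :=
    pancakeAdjMatrix_mulVec_vpartVec hm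
      (by fin_cases i <;> exact quarterWaveMod_add_one_add_sub_one h4 _) j
  simpa using (pancakeAdjMatrix m n).card_le_rootMultiplicity_charpoly _ hindep heigen
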